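/- In the defocusing case ($\mu>\pi^2$, equation $\phi''-\phi^3=-\mu\phi$), the operator $L_\mu^+ = -\frac{d^2}{dx^2} - \mu + 3\phi_\mu^2$ on $H^2\cap H^1_0(0,1)$ is positive definite: its smallest eigenvalue is strictly positive. -/

import Mathlib

/-!
Suppose `L⁺u = E u` with `E ≤ 0` and, after replacing `u` by `-u`, `u(x₀) > 0`. On the nodal
interval `(a, b)` of `u` around `x₀`, the Wronskian `W = u'φ - uφ'` satisfies
`W' = u''φ - uφ'' = uφ(2φ² - E) > 0`, because `L⁺φ = 2φ³`. So `W b > W a`. But `u` vanishes at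
`a` and `b` and is positive in between, so `u'(a) ≥ 0 ≥ u'(b)`, and `φ ≥ 0` gives
`W b = u'(b)φ(b) ≤ 0 ≤ u'(a)φ(a) = W a`.
-/

open Set

/-- The defocusing ground state predicate: positive solution of `φ'' - φ³ = -μ φ` on
`(0,1)` with Dirichlet boundary conditions. -/
def IsGroundStateD (μ : ℝ) (φ : ℝ → ℝ) : Prop :=
  ∃ φ' φ'' φ''' : ℝ → ℝ,
    (∀ x ∈ Set.Icc (0:ℝ) 1, HasDerivAt φ (φ' x) x ∧ HasDerivAt φ' (φ'' x) x ∧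
      HasDerivAt φ'' (φ''' x) x) ∧
    ContinuousOn φ''' (Set.Icc 0 1) ∧
    φ 0 = 0 ∧ φ 1 = 0 ∧
    (∀ x ∈ Set.Ioo (0:ℝ) 1, 0 < φ x) ∧
    (∀ x ∈ Set.Icc (0:ℝ) 1, φ'' x - φ x ^ 3 = -μ * φ x)

lemma HasDerivAt.nonneg_of_eq_zero_of_nonneg_Ioo {u : ℝ → ℝ} {d a b : ℝ} (hab : a < b)
    (h : HasDerivAt u d a) (ha : u a = 0) (hnn : ∀ x ∈ Ioo a b, 0 ≤ u x) : 0 ≤ d := by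
  rw [hasDerivAt_iff_tendsto_slope] at h
  refine ge_of_tendsto (h.mono_left (nhdsGT_le_nhdsNE a)) ?_
  filter_upwards [Ioo_mem_nhdsGT hab] with x hx
  rw [slope_def_field, ha, sub_zero]
  exact div_nonneg (hnn x hx) (sub_nonneg.2 hx.1.le)

lemma HasDerivAt.nonpos_of_eq_zero_of_nonneg_Ioo {u : ℝ → ℝ} {d a b : ℝ} (hab : a < b)
    (h : HasDerivAt u d b) (hb : u b = 0) (hnn : ∀ x ∈ Ioo a b, 0 ≤ u x) : d ≤ 0 := by
  rw [hasDerivAt_iff_tendsto_slope] at h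
  refine le_of_tendsto (h.mono_left (nhdsLT_le_nhdsNE b)) ?_
  filter_upwards [Ioo_mem_nhdsLT hab] with x hx
  rw [slope_def_field, hb, sub_zero]
  exact div_nonpos_of_nonneg_of_nonpos (hnn x hx) (sub_nonpos.2 hx.2.le)

lemma exists_zero_forall_Ioc_pos {u : ℝ → ℝ} {c d : ℝ} (hcd : c ≤ d)
    (hu : ContinuousOn u (Icc c d)) (hc : u c = 0) (hd : 0 < u d) :
    ∃ a ∈ Ico c d, u a = 0 ∧ ∀ x ∈ Ioc a d, 0 < u x := by
  set Z := Icc c d ∩ u ⁻¹' {0}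
  have hZ : IsCompact Z :=
    isCompact_Icc.of_isClosed_subset (hu.preimage_isClosed_of_isClosed isClosed_Icc
      isClosed_singleton) inter_subset_left
  have hcZ : c ∈ Z := ⟨⟨le_rfl, hcd⟩, hc⟩
  obtain ⟨⟨hca, had⟩, ha⟩ := hZ.sSup_mem ⟨c, hcZ⟩
  have hbdd : BddAbove Z := ⟨d, fun x hx => hx.1.2⟩
  refine ⟨sSup Z, ⟨hca, had.lt_of_ne fun h => hd.ne' (h ▸ ha)⟩, ha, fun x hx => ?_⟩
  by_contra! hux
  obtain ⟨y, hy, huy⟩ := intermediate_value_Icc hx.2 (hu.mono (Icc_subset_Icc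
    (hca.trans hx.1.le) le_rfl)) ⟨hux, hd.le⟩
  have : y ≤ sSup Z := le_csSup hbdd ⟨⟨hca.trans (hx.1.le.trans hy.1), hy.2⟩, huy⟩
  linarith [hx.1, hy.1]

lemma exists_zero_forall_Ico_pos {u : ℝ → ℝ} {c d : ℝ} (hcd : c ≤ d)
    (hu : ContinuousOn u (Icc c d)) (hc : 0 < u c) (hd : u d = 0) :
    ∃ b ∈ Ioc c d, u b = 0 ∧ ∀ x ∈ Ico c b, 0 < u x := by
  have hneg : ContinuousOn (fun x => u (-x)) (Icc (-d) (-c)) :=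
    hu.comp continuousOn_neg fun x hx => ⟨le_neg.1 hx.2, neg_le.1 hx.1⟩
  obtain ⟨a, ha, hua, hpos⟩ :=
    exists_zero_forall_Ioc_pos (neg_le_neg hcd) hneg (by simpa) (by simpa)
  refine ⟨-a, ⟨lt_neg.1 ha.2, neg_le.1 ha.1⟩, hua, fun x hx => ?_⟩
  simpa using hpos (-x) ⟨lt_neg.1 hx.2, neg_le_neg hx.1⟩

lemma exists_nodal_interval {u : ℝ → ℝ} {c d x₀ : ℝ} (hu : ContinuousOn u (Icc c d))
    (hc : u c = 0) (hd : u d = 0) (hx₀ : x₀ ∈ Icc c d) (hux₀ : 0 < u x₀) :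
    ∃ a b, c ≤ a ∧ a < b ∧ b ≤ d ∧ u a = 0 ∧ u b = 0 ∧ ∀ x ∈ Ioo a b, 0 < u x := by
  obtain ⟨a, ⟨hca, hax₀⟩, hua, hleft⟩ :=
    exists_zero_forall_Ioc_pos hx₀.1 (hu.mono (Icc_subset_Icc le_rfl hx₀.2)) hc hux₀
  obtain ⟨b, ⟨hx₀b, hbd⟩, hub, hright⟩ :=
    exists_zero_forall_Ico_pos hx₀.2 (hu.mono (Icc_subset_Icc hx₀.1 le_rfl)) hux₀ hd
  refine ⟨a, b, hca, hax₀.trans hx₀b, hbd, hua, hub, fun x hx => ?_⟩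
  rcases le_or_gt x x₀ with hxx₀ | hx₀x
  · exact hleft x ⟨hx.1, hxx₀⟩
  · exact hright x ⟨hx₀x.le, hx.2⟩

lemma wronskian_le_of_nonneg_Ioo {u u' φ φ' : ℝ → ℝ} {a b : ℝ} (hab : a < b)
    (hua' : HasDerivAt u (u' a) a) (hub' : HasDerivAt u (u' b) b) (hua : u a = 0)
    (hub : u b = 0) (hnn : ∀ x ∈ Ioo a b, 0 ≤ u x) (hφa : 0 ≤ φ a) (hφb : 0 ≤ φ b) :
    u' b * φ b - u b * φ' b ≤ u' a * φ a - u a * φ' a := by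
  have ha := hua'.nonneg_of_eq_zero_of_nonneg_Ioo hab hua hnn
  have hb := hub'.nonpos_of_eq_zero_of_nonneg_Ioo hab hub hnn
  rw [hua, hub]
  nlinarith [mul_nonneg ha hφa, mul_nonneg (neg_nonneg.2 hb) hφb]

lemma IsGroundStateD.nonneg {μ : ℝ} {φ : ℝ → ℝ} (hφ : IsGroundStateD μ φ) :
    ∀ x ∈ Icc (0 : ℝ) 1, 0 ≤ φ x := by
  obtain ⟨-, -, -, -, -, hφ0, hφ1, hφpos, -⟩ := hφ
  intro x ⟨hx0, hx1⟩
  rcases hx0.eq_or_lt with rfl | hx0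
  · exact hφ0.ge
  rcases hx1.eq_or_lt with rfl | hx1
  · exact hφ1.ge
  exact (hφpos x ⟨hx0, hx1⟩).le

lemma pos_of_eigenfunction_pos {μ E x₀ : ℝ} {φ u u' u'' : ℝ → ℝ} (hφ : IsGroundStateD μ φ)
    (hu : ∀ x ∈ Icc (0:ℝ) 1, HasDerivAt u (u' x) x ∧ HasDerivAt u' (u'' x) x)
    (hb0 : u 0 = 0) (hb1 : u 1 = 0) (hx₀ : x₀ ∈ Icc (0:ℝ) 1) (hux₀ : 0 < u x₀)
    (heq : ∀ x ∈ Icc (0:ℝ) 1, -u'' x - μ * u x + 3 * φ x ^ 2 * u x = E * u x) :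
    0 < E := by
  have hφnn := hφ.nonneg
  obtain ⟨φ', φ'', _, hφd, -, -, -, hφpos, hode⟩ := hφ
  by_contra! hE
  obtain ⟨a, b, ha0, hab, hb1, hua, hub, hupos⟩ :=
    exists_nodal_interval (fun x hx => (hu x hx).1.continuousAt.continuousWithinAt) hb0 hb1 hx₀ hux₀
  have hsub : Icc a b ⊆ Icc 0 1 := Icc_subset_Icc ha0 hb1
  have hW : ∀ x ∈ Icc a b, HasDerivAt (fun x => u' x * φ x - u x * φ' x)
      (u x * φ x * (2 * φ x ^ 2 - E)) x := by
    intro x hx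
    have hx := hsub hx
    refine (((hu x hx).2.mul (hφd x hx).1).sub ((hu x hx).1.mul (hφd x hx).2.1)).congr_deriv ?_
    linear_combination -(φ x * heq x hx) - u x * hode x hx
  obtain ⟨c, hc, hWc⟩ := exists_hasDerivAt_eq_slope _ _ hab
    (fun x hx => (hW x hx).continuousAt.continuousWithinAt)
    (fun x hx => hW x (Ioo_subset_Icc_self hx))
  have hφc : 0 < φ c := hφpos c ⟨ha0.trans_lt hc.1, hc.2.trans_le hb1⟩
  have hWc_pos : 0 < u c * φ c * (2 * φ c ^ 2 - E) :=
    mul_pos (mul_pos (hupos c hc) hφc) (by nlinarith)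
  have ha : a ∈ Icc (0:ℝ) 1 := hsub (left_mem_Icc.2 hab.le)
  have hb : b ∈ Icc (0:ℝ) 1 := hsub (right_mem_Icc.2 hab.le)
  have hle := wronskian_le_of_nonneg_Ioo (φ' := φ') hab (hu a ha).1 (hu b hb).1 hua hub
    (fun x hx => (hupos x hx).le) (hφnn a ha) (hφnn b hb)
  rw [hWc, lt_div_iff₀ (sub_pos.2 hab)] at hWc_pos
  linarith

theorem stmt_8_general (μ : ℝ) (φ : ℝ → ℝ)
    (hφ : IsGroundStateD μ φ)
    (E : ℝ) (u u' u'' : ℝ → ℝ)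
    (hu : ∀ x ∈ Set.Icc (0:ℝ) 1, HasDerivAt u (u' x) x ∧ HasDerivAt u' (u'' x) x)
    (hb0 : u 0 = 0) (hb1 : u 1 = 0)
    (hne : ∃ x ∈ Set.Ioo (0:ℝ) 1, u x ≠ 0)
    (heq : ∀ x ∈ Set.Icc (0:ℝ) 1,
      -u'' x - μ * u x + 3 * φ x ^ 2 * u x = E * u x) :
    0 < E := by
  obtain ⟨x₀, hx₀, hux₀⟩ := hne
  replace hx₀ := Ioo_subset_Icc_self hx₀
  rcases hux₀.lt_or_gt with hneg | hpos
  · refine pos_of_eigenfunction_pos hφ (u := -u) (u' := -u') (u'' := -u'')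
      (fun x hx => ⟨(hu x hx).1.neg, (hu x hx).2.neg⟩) (by simp [hb0]) (by simp [hb1]) hx₀
      (by simpa using hneg) fun x hx => ?_
    simp only [Pi.neg_apply]
    linear_combination -heq x hx
  · exact pos_of_eigenfunction_pos hφ hu hb0 hb1 hx₀ hpos heq

/-- in the defocusing case (`μ > π²`), the operator
`L_μ⁺ = -d²/dx² - μ + 3φ_μ²` with Dirichlet conditions is positive definite: every
eigenvalue is strictly positive. -/
theorem stmt_8 (μ : ℝ) (hμ : Real.pi ^ 2 < μ) (φ : ℝ → ℝ)
    (hφ : IsGroundStateD μ φ)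
    (E : ℝ) (u u' u'' : ℝ → ℝ)
    (hu : ∀ x ∈ Set.Icc (0:ℝ) 1, HasDerivAt u (u' x) x ∧ HasDerivAt u' (u'' x) x)
    (hb0 : u 0 = 0) (hb1 : u 1 = 0)
    (hne : ∃ x ∈ Set.Ioo (0:ℝ) 1, u x ≠ 0)
    (heq : ∀ x ∈ Set.Icc (0:ℝ) 1,
      -u'' x - μ * u x + 3 * φ x ^ 2 * u x = E * u x) :
    0 < E :=
  stmt_8_general μ φ hφ E u u' u'' hu hb0 hb1 hne heq
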